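/- Under the hypotheses of the fixed-point setting (ω ∈ [0,1]; Q_ω nonsingular M-matrix with Q_ω·1 > 0; splittings A = A₁ − A₂, D = D₁ − D₂; Ã = (A₁)_ω − |A₂|, D̃ = (D₁)_ω − |D₂|, B̃ = |B|, C̃ = |C|; I⊗(A₁)_ω + ((D₁)_ω)ᵀ⊗I a nonsingular M-matrix; Q̃ = [[D̃, −C̃], [−B̃, Ã]] a nonsingular M-matrix with Q̃ ≤ Q_ω and Q̃·1 > 0), let Φ̃ be the minimal nonnegative solution of XC̃X − XD̃ − ÃX + B̃ = 0 and Φ the unique solution of XCX − XD − AX + B = 0 with |Φ| ≤ Φ̃. Then ρ((I⊗A₁ + D₁ᵀ⊗I)⁻¹(I⊗(A₂ + ΦC) + (D₂ + CΦ)ᵀ⊗I)) ≤ ρ((I⊗(A₁)_ω + ((D₁)_ω)ᵀ⊗I)⁻¹(I⊗(|A₂| + Φ̃C̃) + (|D₂| + C̃Φ̃)ᵀ⊗I)) < 1. -/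

import Mathlib

open Matrix Filter Kronecker

noncomputable section

/-- The ω-weighted linear functional `z ↦ ω·Re z + (1-ω)·Im z`. -/
def wlin (ω : ℝ) (z : ℂ) : ℝ := ω * z.re + (1 - ω) * z.im

/-- The ω-comparison matrix of a complex square matrix. -/
def omegaComp {N : Type*} [DecidableEq N] (ω : ℝ) (B : Matrix N N ℂ) : Matrix N N ℝ :=
  Matrix.of fun i j => if i = j then wlin ω (B i i) else -‖B i j‖

/-- A real square matrix is a nonsingular M-matrix: nonpositive off-diagonal entries and
`M *ᵥ u > 0` entrywise for some entrywise positive `u`. -/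
def IsNonsingMMatrix {N : Type*} [Fintype N] (M : Matrix N N ℝ) : Prop :=
  (∀ i j, i ≠ j → M i j ≤ 0) ∧ ∃ u : N → ℝ, (∀ i, 0 < u i) ∧ ∀ i, 0 < (M *ᵥ u) i

/-- Entrywise absolute value of a complex matrix. -/
def cabs {α β : Type*} (M : Matrix α β ℂ) : Matrix α β ℝ :=
  Matrix.of fun i j => ‖M i j‖

/-- Spectral radius of a complex square matrix: supremum of the moduli of its eigenvalues. -/
def specRad {N : Type*} [Fintype N] [DecidableEq N] (M : Matrix N N ℂ) : ℝ :=
  ⨆ μ ∈ spectrum ℂ M, ‖μ‖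

/-- Complexification of a real matrix. -/
def realToC {α β : Type*} (M : Matrix α β ℝ) : Matrix α β ℂ := M.map Complex.ofReal

/-!
Let `K = I ⊗ (A₁)_ω + ((D₁)_ω)ᵀ ⊗ I` and `N = I ⊗ (|A₂| + Φ̃C̃) + (|D₂| + C̃Φ̃)ᵀ ⊗ I`.

Minimality of `Φ̃` against the limit of the monotone iteration `Ã Xₖ₊₁ + Xₖ₊₁ D̃ = B̃ + Xₖ C̃ Xₖ`,
`X₀ = 0`, whose row sums stay at most `1` because `Q̃ 1 > 0`, gives `Φ̃ 1 ≤ 1`. Then the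
closed-loop matrices `Ã - Φ̃C̃` and `D̃ - C̃Φ̃` are nonsingular M-matrices (test vectors `1 - Φ̃ 1`
and `1`), hence so is their Kronecker sum `K - N`. As `K` is a Z-matrix and `N ≥ 0`, this is a
regular splitting, so `K` is a nonsingular M-matrix and `ρ(K⁻¹N) < 1`.

`K` is the ω-comparison matrix of `I ⊗ A₁ + D₁ᵀ ⊗ I`, so the inverse of the latter is dominated
entrywise by `K⁻¹`; together with `|Φ| ≤ Φ̃` the complex iteration matrix is dominated entrywise
by `K⁻¹N`, and Gelfand's formula turns this into the comparison of spectral radii.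
-/

open scoped ENNReal Topology

section MMatrix

variable {ι : Type*} [Fintype ι]

theorem mulVec_apply_le_mulVec_apply_of_offDiag_nonpos {M : Matrix ι ι ℝ}
    (hZ : ∀ i j, i ≠ j → M i j ≤ 0) {x y : ι → ℝ} {i : ι} (hxy : ∀ j, x j ≤ y j)
    (hi : x i = y i) : (M *ᵥ y) i ≤ (M *ᵥ x) i := by
  refine Finset.sum_le_sum fun j _ => ?_
  rcases eq_or_ne i j with rfl | hij
  · rw [hi]
  · exact mul_le_mul_of_nonpos_left (hxy j) (hZ i j hij)

omit [Fintype ι] in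
theorem mulVec_apply_le_mulVec_apply_of_nonneg {κ : Type*} [Fintype κ] {M : Matrix ι κ ℝ}
    (hM : ∀ i j, 0 ≤ M i j) {x y : κ → ℝ} (hxy : ∀ j, x j ≤ y j) (i : ι) :
    (M *ᵥ x) i ≤ (M *ᵥ y) i :=
  Finset.sum_le_sum fun j _ => mul_le_mul_of_nonneg_left (hxy j) (hM i j)

omit [Fintype ι] in
theorem mulVec_apply_le_mulVec_apply_of_le {κ : Type*} [Fintype κ] {M M' : Matrix ι κ ℝ}
    (hM : ∀ i j, M i j ≤ M' i j) {x : κ → ℝ} (hx : ∀ j, 0 ≤ x j) (i : ι) :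
    (M *ᵥ x) i ≤ (M' *ᵥ x) i :=
  Finset.sum_le_sum fun j _ => mul_le_mul_of_nonneg_right (hM i j) (hx j)

omit [Fintype ι] in
theorem mulVec_apply_nonneg {κ : Type*} [Fintype κ] {M : Matrix ι κ ℝ}
    (hM : ∀ i j, 0 ≤ M i j) {x : κ → ℝ} (hx : ∀ j, 0 ≤ x j) (i : ι) : 0 ≤ (M *ᵥ x) i :=
  Finset.sum_nonneg fun j _ => mul_nonneg (hM i j) (hx j)

theorem mul_apply_nonneg {l m n : Type*} [Fintype m] {P : Matrix l m ℝ} {Q : Matrix m n ℝ}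
    (hP : ∀ i j, 0 ≤ P i j) (hQ : ∀ i j, 0 ≤ Q i j) (i : l) (j : n) : 0 ≤ (P * Q) i j :=
  Finset.sum_nonneg fun k _ => mul_nonneg (hP i k) (hQ k j)

theorem mul_mul_apply_mono {m n : Type*} [Fintype m] [Fintype n] {C : Matrix n m ℝ}
    (hC : ∀ i j, 0 ≤ C i j) {X Y : Matrix m n ℝ}
    (hX : ∀ i j, 0 ≤ X i j) (hXY : ∀ i j, X i j ≤ Y i j) (i : m) (j : n) :
    (X * C * X) i j ≤ (Y * C * Y) i j := by
  have hY : ∀ i j, 0 ≤ Y i j := fun i j => (hX i j).trans (hXY i j)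
  refine Finset.sum_le_sum fun k _ => mul_le_mul ?_ (hXY k j) (hX k j)
    (mul_apply_nonneg hY hC i k)
  exact Finset.sum_le_sum fun l _ => mul_le_mul_of_nonneg_right (hXY i l) (hC l k)

namespace IsNonsingMMatrix

variable {M : Matrix ι ι ℝ}

theorem nonneg_of_mulVec_nonneg (hM : IsNonsingMMatrix M) {x : ι → ℝ}
    (hx : ∀ i, 0 ≤ (M *ᵥ x) i) (i : ι) : 0 ≤ x i := by
  obtain ⟨hZ, u, hu, hMu⟩ := hM
  by_contra! hxi
  obtain ⟨i₀, -, hmin⟩ :=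
    Finset.univ.exists_min_image (fun j => x j / u j) ⟨i, Finset.mem_univ _⟩
  set t := x i₀ / u i₀
  have ht : t < 0 := (hmin i (Finset.mem_univ _)).trans_lt (div_neg_of_neg_of_pos hxi (hu i))
  have hle : ∀ j, (t • u) j ≤ x j := fun j => (le_div_iff₀ (hu j)).1 (hmin j (Finset.mem_univ _))
  have heq : (t • u) i₀ = x i₀ := div_mul_cancel₀ _ (hu i₀).ne'
  have hrow := mulVec_apply_le_mulVec_apply_of_offDiag_nonpos hZ hle heq
  rw [mulVec_smul, Pi.smul_apply, smul_eq_mul] at hrow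
  linarith [hx i₀, mul_neg_of_neg_of_pos ht (hMu i₀)]

theorem eq_zero_of_mulVec_eq_zero (hM : IsNonsingMMatrix M) {x : ι → ℝ} (hx : M *ᵥ x = 0) :
    x = 0 := by
  funext i
  have hneg := hM.nonneg_of_mulVec_nonneg (x := -x) (fun j => by simp [mulVec_neg, hx]) i
  have hpos := hM.nonneg_of_mulVec_nonneg (x := x) (fun j => by simp [hx]) i
  exact le_antisymm (neg_nonneg.1 hneg) hpos

-- Perturb `p` by a small multiple of `1`.
theorem of_nonneg_of_mulVec_pos (hZ : ∀ i j, i ≠ j → M i j ≤ 0) {p : ι → ℝ}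
    (hp : ∀ i, 0 ≤ p i) (hMp : ∀ i, 0 < (M *ᵥ p) i) : IsNonsingMMatrix M := by
  have hsplit : ∀ (ε : ℝ) i, (M *ᵥ (p + ε • 1)) i = (M *ᵥ p) i + ε * (M *ᵥ 1) i := by
    intro ε i
    simp [mulVec_add, mulVec_smul]
  have hev : ∀ᶠ ε in 𝓝 (0 : ℝ), ∀ i, 0 < (M *ᵥ (p + ε • 1)) i := by
    refine Filter.eventually_all.2 fun i => ?_
    simp only [hsplit]
    exact (continuous_const.add (continuous_id.mul continuous_const)).continuousAt.eventually
      (lt_mem_nhds (by simpa using hMp i))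
  obtain ⟨ε, hε, hε0⟩ := ((hev.filter_mono nhdsWithin_le_nhds).and
    (self_mem_nhdsWithin (s := Set.Ioi 0))).exists
  exact ⟨hZ, p + ε • 1, fun i => by
    simp only [Pi.add_apply, Pi.smul_apply, Pi.one_apply, smul_eq_mul, mul_one]
    linarith [hp i], hε⟩

variable [DecidableEq ι]

theorem isUnit_det (hM : IsNonsingMMatrix M) : IsUnit M.det := by
  rw [isUnit_iff_ne_zero]
  intro h
  obtain ⟨v, hv, hMv⟩ := exists_mulVec_eq_zero_iff.2 h
  exact hv (hM.eq_zero_of_mulVec_eq_zero hMv)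

theorem inv_mulVec_apply_nonneg (hM : IsNonsingMMatrix M) {y : ι → ℝ} (hy : ∀ i, 0 ≤ y i)
    (i : ι) : 0 ≤ (M⁻¹ *ᵥ y) i :=
  hM.nonneg_of_mulVec_nonneg (by rwa [mulVec_mulVec, mul_nonsing_inv _ hM.isUnit_det, one_mulVec]) i

theorem inv_apply_nonneg (hM : IsNonsingMMatrix M) (i j : ι) : 0 ≤ M⁻¹ i j := by
  simpa [mulVec_single_one] using
    hM.inv_mulVec_apply_nonneg (y := Pi.single j 1) (fun k => by by_cases h : k = j <;> simp [h]) i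

theorem transpose (hM : IsNonsingMMatrix M) : IsNonsingMMatrix Mᵀ := by
  refine .of_nonneg_of_mulVec_pos (fun i j hij => hM.1 j i hij.symm)
    (p := M⁻¹ᵀ *ᵥ 1) (mulVec_apply_nonneg (fun i j => hM.inv_apply_nonneg j i)
      fun _ => zero_le_one) fun i => ?_
  rw [mulVec_mulVec, ← transpose_mul, nonsing_inv_mul _ hM.isUnit_det, transpose_one, one_mulVec]
  exact one_pos

end IsNonsingMMatrix

end MMatrix

section Comparison

variable {ι : Type*} [Fintype ι] [DecidableEq ι] {ω : ℝ}

theorem wlin_add (ω : ℝ) (a b : ℂ) : wlin ω (a + b) = wlin ω a + wlin ω b := by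
  simp only [wlin, Complex.add_re, Complex.add_im]
  ring

theorem wlin_le_norm (hω : ω ∈ Set.Icc (0 : ℝ) 1) (z : ℂ) : wlin ω z ≤ ‖z‖ := by
  have hre := Complex.re_le_norm z
  have him := (abs_le.1 (Complex.abs_im_le_norm z)).2
  obtain ⟨hω0, hω1⟩ := hω
  simp only [wlin]
  nlinarith

omit [Fintype ι] in
theorem omegaComp_apply_nonpos_of_ne (ω : ℝ) (M : Matrix ι ι ℂ)
    (i j : ι) (hij : i ≠ j) : omegaComp ω M i j ≤ 0 := by
  simp [omegaComp, hij]

omit [Fintype ι] in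
theorem omegaComp_sub_cabs_apply_nonpos_of_ne (ω : ℝ) (M N : Matrix ι ι ℂ) (i j : ι)
    (hij : i ≠ j) : (omegaComp ω M - cabs N) i j ≤ 0 := by
  rw [Matrix.sub_apply]
  exact sub_nonpos.2 ((omegaComp_apply_nonpos_of_ne ω M i j hij).trans (norm_nonneg (N i j)))

theorem omegaComp_mulVec_norm_le (hω : ω ∈ Set.Icc (0 : ℝ) 1) (M : Matrix ι ι ℂ)
    (x : ι → ℂ) (i : ι) : (omegaComp ω M *ᵥ fun k => ‖x k‖) i ≤ ‖(M *ᵥ x) i‖ := by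
  have hdiag : ‖M i i * x i‖ ≤ ‖(M *ᵥ x) i‖ + ∑ j ∈ Finset.univ.erase i, ‖M i j‖ * ‖x j‖ := by
    have hsplit : M i i * x i = (M *ᵥ x) i - ∑ j ∈ Finset.univ.erase i, M i j * x j := by
      rw [mulVec, dotProduct, ← Finset.add_sum_erase _ _ (Finset.mem_univ i)]
      ring
    calc ‖M i i * x i‖ ≤ ‖(M *ᵥ x) i‖ + ‖∑ j ∈ Finset.univ.erase i, M i j * x j‖ :=
          hsplit ▸ norm_sub_le _ _
      _ ≤ _ := by
          gcongr
          exact (norm_sum_le _ _).trans_eq (by simp only [norm_mul])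
  have hoff : ∀ j ∈ Finset.univ.erase i, omegaComp ω M i j * ‖x j‖ = -(‖M i j‖ * ‖x j‖) :=
    fun j hj => by simp [omegaComp, (Finset.ne_of_mem_erase hj).symm]
  rw [mulVec, dotProduct, ← Finset.add_sum_erase _ _ (Finset.mem_univ i),
    Finset.sum_congr rfl hoff, Finset.sum_neg_distrib]
  have hwlin : omegaComp ω M i i * ‖x i‖ ≤ ‖M i i * x i‖ := by
    rw [norm_mul]
    exact mul_le_mul_of_nonneg_right (by simpa [omegaComp] using wlin_le_norm hω _)
      (norm_nonneg _)
  linarith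

theorem norm_le_inv_omegaComp_mulVec (hω : ω ∈ Set.Icc (0 : ℝ) 1) {M : Matrix ι ι ℂ}
    (hM : IsNonsingMMatrix (omegaComp ω M)) (x : ι → ℂ) (i : ι) :
    ‖x i‖ ≤ ((omegaComp ω M)⁻¹ *ᵥ fun k => ‖(M *ᵥ x) k‖) i := by
  have hx : (fun k => ‖x k‖) = (omegaComp ω M)⁻¹ *ᵥ omegaComp ω M *ᵥ fun k => ‖x k‖ := by
    rw [mulVec_mulVec, nonsing_inv_mul _ hM.isUnit_det, one_mulVec]
  exact (congrFun hx i).le.trans (mulVec_apply_le_mulVec_apply_of_nonneg hM.inv_apply_nonneg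
    (omegaComp_mulVec_norm_le hω M x) i)

theorem isUnit_det_of_isNonsingMMatrix_omegaComp (hω : ω ∈ Set.Icc (0 : ℝ) 1)
    {M : Matrix ι ι ℂ} (hM : IsNonsingMMatrix (omegaComp ω M)) : IsUnit M.det := by
  rw [isUnit_iff_ne_zero]
  intro h
  obtain ⟨v, hv, hMv⟩ := exists_mulVec_eq_zero_iff.2 h
  refine hv (funext fun i => norm_le_zero_iff.1 ?_)
  have hzero : (fun k => ‖(M *ᵥ v) k‖) = 0 := by funext k; simp [hMv]
  simpa [hzero] using norm_le_inv_omegaComp_mulVec hω hM v i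

theorem norm_inv_apply_le_inv_omegaComp (hω : ω ∈ Set.Icc (0 : ℝ) 1) {M : Matrix ι ι ℂ}
    (hM : IsNonsingMMatrix (omegaComp ω M)) (i j : ι) :
    ‖M⁻¹ i j‖ ≤ (omegaComp ω M)⁻¹ i j := by
  have h := norm_le_inv_omegaComp_mulVec hω hM (M⁻¹ *ᵥ Pi.single j 1) i
  rw [mulVec_mulVec, mul_nonsing_inv _ (isUnit_det_of_isNonsingMMatrix_omegaComp hω hM),
    one_mulVec] at h
  have hsingle : (fun k => ‖(Pi.single j 1 : ι → ℂ) k‖) = Pi.single j 1 := by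
    funext k
    by_cases hk : k = j <;> simp [hk]
  simpa [hsingle, mulVec_single_one] using h

end Comparison

section SpectralRadius

variable {ι : Type*} [Fintype ι] [DecidableEq ι]

theorem exists_mulVec_eq_smul_of_mem_spectrum {M : Matrix ι ι ℂ} {μ : ℂ}
    (h : μ ∈ spectrum ℂ M) : ∃ x : ι → ℂ, x ≠ 0 ∧ M *ᵥ x = μ • x := by
  rw [spectrum.mem_iff, isUnit_iff_isUnit_det, isUnit_iff_ne_zero, not_not] at h
  obtain ⟨v, hv, h0⟩ := exists_mulVec_eq_zero_iff.2 h
  refine ⟨v, hv, (sub_eq_zero.1 ?_).symm⟩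
  rwa [sub_mulVec, Algebra.algebraMap_eq_smul_one, smul_mulVec, one_mulVec] at h0

theorem specRad_le_of_sum_norm_mul_le {M : Matrix ι ι ℂ} {v : ι → ℝ} (hv : ∀ i, 0 < v i)
    {θ : ℝ} (hθ : 0 ≤ θ) (h : ∀ i, ∑ j, ‖M i j‖ * v j ≤ θ * v i) : specRad M ≤ θ := by
  refine Real.iSup_le (fun μ => Real.iSup_le (fun hμ => ?_) hθ) hθ
  obtain ⟨x, hx, hMx⟩ := exists_mulVec_eq_smul_of_mem_spectrum hμ
  obtain ⟨j₁, hj₁⟩ := Function.ne_iff.1 hx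
  obtain ⟨i₀, -, hmax⟩ :=
    Finset.univ.exists_max_image (fun i => ‖x i‖ / v i) ⟨j₁, Finset.mem_univ _⟩
  set r := ‖x i₀‖ / v i₀
  have hr : 0 < r :=
    (div_pos (norm_pos_iff.2 hj₁) (hv j₁)).trans_le (hmax j₁ (Finset.mem_univ _))
  have hxr : ∀ k, ‖x k‖ ≤ r * v k := fun k => (div_le_iff₀ (hv k)).1 (hmax k (Finset.mem_univ _))
  have hxi₀ : ‖x i₀‖ = r * v i₀ := (div_mul_cancel₀ _ (hv i₀).ne').symm
  have key : ‖μ‖ * (r * v i₀) ≤ θ * (r * v i₀) := by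
    calc ‖μ‖ * (r * v i₀) = ‖(M *ᵥ x) i₀‖ := by rw [hMx, ← hxi₀]; simp
      _ ≤ ∑ j, ‖M i₀ j‖ * ‖x j‖ := (norm_sum_le _ _).trans_eq (by simp only [norm_mul])
      _ ≤ ∑ j, ‖M i₀ j‖ * (r * v j) :=
          Finset.sum_le_sum fun j _ => mul_le_mul_of_nonneg_left (hxr j) (norm_nonneg _)
      _ = r * ∑ j, ‖M i₀ j‖ * v j := by
          rw [Finset.mul_sum]
          exact Finset.sum_congr rfl fun j _ => by ring
      _ ≤ r * (θ * v i₀) := mul_le_mul_of_nonneg_left (h i₀) hr.le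
      _ = θ * (r * v i₀) := by ring
  exact le_of_mul_le_mul_right key (mul_pos hr (hv i₀))

theorem specRad_realToC_le_of_mulVec_le {T : Matrix ι ι ℝ} (hT : ∀ i j, 0 ≤ T i j)
    {v : ι → ℝ} (hv : ∀ i, 0 < v i) {θ : ℝ} (hθ : 0 ≤ θ) (h : ∀ i, (T *ᵥ v) i ≤ θ * v i) :
    specRad (realToC T) ≤ θ := by
  refine specRad_le_of_sum_norm_mul_le hv hθ fun i => (h i).trans_eq' ?_
  refine Finset.sum_congr rfl fun j _ => ?_
  simp [realToC, abs_of_nonneg (hT i j)]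

theorem specRad_eq_toReal_spectralRadius (M : Matrix ι ι ℂ) :
    specRad M = (spectralRadius ℂ M).toReal := by
  have hfin : ∀ μ : ℂ, ⨆ _ : μ ∈ spectrum ℂ M, (‖μ‖₊ : ℝ≥0∞) ≠ ∞ :=
    fun μ => ne_top_of_le_ne_top ENNReal.coe_ne_top (iSup_le fun _ => le_rfl)
  rw [spectralRadius, ENNReal.toReal_iSup hfin, specRad]
  congr 1 with μ
  rw [ENNReal.toReal_iSup fun _ => ENNReal.coe_ne_top]
  rfl

omit [Fintype ι] [DecidableEq ι] in
theorem norm_mul_apply_le {κ ρ : Type*} [Fintype κ] {P : Matrix ι κ ℂ} {P' : Matrix ι κ ℝ}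
    {Q : Matrix κ ρ ℂ} {Q' : Matrix κ ρ ℝ} (hP : ∀ i j, ‖P i j‖ ≤ P' i j)
    (hQ : ∀ i j, ‖Q i j‖ ≤ Q' i j) (i : ι) (j : ρ) : ‖(P * Q) i j‖ ≤ (P' * Q') i j :=
  (norm_sum_le _ _).trans <| Finset.sum_le_sum fun c _ => (norm_mul_le _ _).trans <|
    mul_le_mul (hP i c) (hQ c j) (norm_nonneg _) ((norm_nonneg _).trans (hP i c))

omit [Fintype ι] [DecidableEq ι] in
theorem norm_add_mul_apply_le {κ ρ : Type*} [Fintype κ] {P : Matrix ι ρ ℂ} {X : Matrix ι κ ℂ}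
    {X' : Matrix ι κ ℝ} {Q : Matrix κ ρ ℂ} {Q' : Matrix κ ρ ℝ} (hX : ∀ i j, ‖X i j‖ ≤ X' i j)
    (hQ : ∀ i j, ‖Q i j‖ ≤ Q' i j) (i : ι) (j : ρ) : ‖(P + X * Q) i j‖ ≤ (cabs P + X' * Q') i j :=
  (norm_add_le _ _).trans (add_le_add le_rfl (norm_mul_apply_le hX hQ i j))

theorem norm_pow_apply_le {A : Matrix ι ι ℂ} {R : Matrix ι ι ℝ} (h : ∀ i j, ‖A i j‖ ≤ R i j)
    (k : ℕ) (i j : ι) : ‖(A ^ k) i j‖ ≤ (R ^ k) i j := by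
  induction k generalizing i j with
  | zero => by_cases hij : i = j <;> simp [one_apply, hij]
  | succ k ih => rw [pow_succ, pow_succ]; exact norm_mul_apply_le ih h i j

end SpectralRadius

section Gelfand

attribute [local instance] Matrix.linftyOpNormedRing Matrix.linftyOpNormedAlgebra

variable {ι : Type*} [Fintype ι] [DecidableEq ι]

/-- Compare `‖A ^ k‖` with `‖R ^ k‖` in the `∞`-operator norm and apply Gelfand's formula. -/
theorem specRad_le_specRad_realToC {A : Matrix ι ι ℂ} {R : Matrix ι ι ℝ}
    (h : ∀ i j, ‖A i j‖ ≤ R i j) : specRad A ≤ specRad (realToC R) := by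
  have : CompleteSpace (Matrix ι ι ℂ) := FiniteDimensional.complete ℂ _
  have hpow : ∀ k : ℕ, ‖A ^ k‖₊ ≤ ‖realToC R ^ k‖₊ := by
    intro k
    rw [linfty_opNNNorm_def, linfty_opNNNorm_def]
    refine Finset.sup_mono_fun fun i _ => Finset.sum_le_sum fun j _ => ?_
    have hRk : realToC R ^ k = realToC (R ^ k) := (map_pow Complex.ofRealHom.mapMatrix R k).symm
    rw [← NNReal.coe_le_coe, coe_nnnorm, coe_nnnorm, hRk]
    exact (norm_pow_apply_le h k i j).trans ((le_abs_self _).trans_eq (by simp [realToC]))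
  have hρ : spectralRadius ℂ A ≤ spectralRadius ℂ (realToC R) :=
    le_of_tendsto_of_tendsto' (spectrum.pow_nnnorm_pow_one_div_tendsto_nhds_spectralRadius A)
      (spectrum.pow_nnnorm_pow_one_div_tendsto_nhds_spectralRadius (realToC R))
      fun k => ENNReal.rpow_le_rpow (by exact_mod_cast hpow k) (by positivity)
  rw [specRad_eq_toReal_spectralRadius, specRad_eq_toReal_spectralRadius]
  exact ENNReal.toReal_mono (ne_top_of_le_ne_top (by finiteness)
    (spectrum.spectralRadius_le_pow_nnnorm_pow_one_div ℂ _ 0)) hρ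

end Gelfand

section KroneckerSum

variable {m n : Type*} [DecidableEq m] [DecidableEq n]

theorem kroneckerSum_apply {R : Type*} [Semiring R] (A : Matrix m m R) (D : Matrix n n R)
    (i k : n) (j l : m) :
    ((1 : Matrix n n R) ⊗ₖ A + Dᵀ ⊗ₖ (1 : Matrix m m R)) (i, j) (k, l) =
      (if i = k then A j l else 0) + (if j = l then D k i else 0) := by
  simp [kroneckerMap_apply, one_apply, ite_mul]

theorem kroneckerSum_mulVec_vec [Fintype m] [Fintype n] {R : Type*} [CommSemiring R]
    (A : Matrix m m R) (D : Matrix n n R) (X : Matrix m n R) :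
    ((1 : Matrix n n R) ⊗ₖ A + Dᵀ ⊗ₖ (1 : Matrix m m R)) *ᵥ vec X = vec (A * X + X * D) := by
  rw [add_mulVec, kronecker_mulVec_vec, kronecker_mulVec_vec, transpose_one,
    transpose_transpose, Matrix.mul_one, Matrix.one_mul, vec_add]

theorem kroneckerSum_sub {R : Type*} [Ring R] (A A' : Matrix m m R) (D D' : Matrix n n R) :
    (1 : Matrix n n R) ⊗ₖ (A - A') + (D - D')ᵀ ⊗ₖ (1 : Matrix m m R) =
      (1 ⊗ₖ A + Dᵀ ⊗ₖ 1) - (1 ⊗ₖ A' + D'ᵀ ⊗ₖ 1) := by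
  ext ⟨i, j⟩ ⟨k, l⟩
  simp only [Matrix.add_apply, Matrix.sub_apply, kroneckerMap_apply, transpose_apply]
  noncomm_ring

theorem kroneckerSum_apply_nonpos_of_ne {A : Matrix m m ℝ} {D : Matrix n n ℝ}
    (hA : ∀ i j, i ≠ j → A i j ≤ 0) (hD : ∀ i j, i ≠ j → D i j ≤ 0) :
    ∀ r s, r ≠ s → ((1 : Matrix n n ℝ) ⊗ₖ A + Dᵀ ⊗ₖ (1 : Matrix m m ℝ)) r s ≤ 0 := by
  rintro ⟨i, j⟩ ⟨k, l⟩ hrs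
  rw [kroneckerSum_apply]
  by_cases hik : i = k
  · have hjl : j ≠ l := fun hjl => hrs (by rw [hik, hjl])
    simpa [hik, hjl] using hA j l hjl
  · by_cases hjl : j = l
    · simpa [hik, hjl] using hD k i (Ne.symm hik)
    · simp [hik, hjl]

theorem kroneckerSum_apply_nonneg {A : Matrix m m ℝ} {D : Matrix n n ℝ}
    (hA : ∀ i j, 0 ≤ A i j) (hD : ∀ i j, 0 ≤ D i j) (r s : n × m) :
    0 ≤ ((1 : Matrix n n ℝ) ⊗ₖ A + Dᵀ ⊗ₖ (1 : Matrix m m ℝ)) r s := by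
  obtain ⟨i, j⟩ := r
  obtain ⟨k, l⟩ := s
  rw [kroneckerSum_apply]
  exact add_nonneg (by split_ifs <;> simp [hA]) (by split_ifs <;> simp [hD])

/-- The positive vector is `vec (p qᵀ)`, with `A p > 0` and `Dᵀ q > 0`. -/
theorem IsNonsingMMatrix.kroneckerSum [Fintype m] [Fintype n] {A : Matrix m m ℝ} {D : Matrix n n ℝ}
    (hA : IsNonsingMMatrix A) (hD : IsNonsingMMatrix D) :
    IsNonsingMMatrix ((1 : Matrix n n ℝ) ⊗ₖ A + Dᵀ ⊗ₖ (1 : Matrix m m ℝ)) := by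
  obtain ⟨hAZ, p, hp, hAp⟩ := hA
  obtain ⟨-, q, hq, hDq⟩ := hD.transpose
  refine ⟨kroneckerSum_apply_nonpos_of_ne hAZ hD.1, vec (vecMulVec p q),
    fun r => mul_pos (hp r.2) (hq r.1), ?_⟩
  rintro ⟨j, i⟩
  rw [kroneckerSum_mulVec_vec, mul_vecMulVec, vecMulVec_mul, ← mulVec_transpose]
  exact add_pos (mul_pos (hAp i) (hq j)) (mul_pos (hp i) (hDq j))

theorem omegaComp_kroneckerSum (ω : ℝ) (A : Matrix m m ℂ) (D : Matrix n n ℂ) :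
    omegaComp ω ((1 : Matrix n n ℂ) ⊗ₖ A + Dᵀ ⊗ₖ (1 : Matrix m m ℂ)) =
      (1 : Matrix n n ℝ) ⊗ₖ omegaComp ω A + (omegaComp ω D)ᵀ ⊗ₖ (1 : Matrix m m ℝ) := by
  ext ⟨i, j⟩ ⟨k, l⟩
  simp only [omegaComp, of_apply, kroneckerSum_apply, Prod.mk.injEq]
  by_cases hik : i = k <;> by_cases hjl : j = l
  · subst hik hjl
    simp [wlin_add]
  · simp [hik, hjl]
  · simp [hik, hjl, Ne.symm hik]
  · simp [hik, hjl]

theorem norm_kroneckerSum_apply_le {A : Matrix m m ℂ} {D : Matrix n n ℂ} {A' : Matrix m m ℝ}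
    {D' : Matrix n n ℝ} (hA : ∀ i j, ‖A i j‖ ≤ A' i j) (hD : ∀ i j, ‖D i j‖ ≤ D' i j)
    (r s : n × m) :
    ‖((1 : Matrix n n ℂ) ⊗ₖ A + Dᵀ ⊗ₖ (1 : Matrix m m ℂ)) r s‖ ≤
      ((1 : Matrix n n ℝ) ⊗ₖ A' + D'ᵀ ⊗ₖ (1 : Matrix m m ℝ)) r s := by
  obtain ⟨i, j⟩ := r
  obtain ⟨k, l⟩ := s
  rw [kroneckerSum_apply, kroneckerSum_apply]
  refine (norm_add_le _ _).trans (add_le_add ?_ ?_) <;> split_ifs <;> simp [hA, hD]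

end KroneckerSum

section RegularSplitting

variable {ι : Type*} [Fintype ι] {K N : Matrix ι ι ℝ}

theorem IsNonsingMMatrix.of_sub (hK : ∀ i j, i ≠ j → K i j ≤ 0) (hN : ∀ i j, 0 ≤ N i j)
    (hKN : IsNonsingMMatrix (K - N)) : IsNonsingMMatrix K := by
  obtain ⟨-, x, hx, hKNx⟩ := hKN
  refine ⟨hK, x, hx, fun i => ?_⟩
  have hNx := mulVec_apply_nonneg hN (fun j => (hx j).le) i
  have h := hKNx i
  rw [sub_mulVec, Pi.sub_apply] at h
  linarith

/-- If `x > 0` and `(K - N) x > 0`, then `N x ≤ θ K x` for some `θ < 1`, hence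
`K⁻¹ N x ≤ θ x`. -/
theorem specRad_realToC_inv_mul_lt_one [DecidableEq ι] (hK : ∀ i j, i ≠ j → K i j ≤ 0)
    (hN : ∀ i j, 0 ≤ N i j) (hKN : IsNonsingMMatrix (K - N)) :
    specRad (realToC (K⁻¹ * N)) < 1 := by
  have hKM := IsNonsingMMatrix.of_sub hK hN hKN
  obtain ⟨-, x, hx, hKNx⟩ := hKN
  have hlt : ∀ i, (N *ᵥ x) i < 1 * (K *ᵥ x) i := fun i => by
    have h := hKNx i
    rw [sub_mulVec, Pi.sub_apply] at h
    linarith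
  have hev : ∀ᶠ θ in 𝓝 (1 : ℝ), 0 < θ ∧ ∀ i, (N *ᵥ x) i < θ * (K *ᵥ x) i :=
    (lt_mem_nhds one_pos).and <| Filter.eventually_all.2 fun i =>
      (continuous_id.mul continuous_const).continuousAt.eventually (lt_mem_nhds (hlt i))
  obtain ⟨θ, ⟨hθ, hNK⟩, hθ1⟩ :=
    ((hev.filter_mono nhdsWithin_le_nhds).and (self_mem_nhdsWithin (s := Set.Iio 1))).exists
  refine (specRad_realToC_le_of_mulVec_le (fun i j => ?_) hx hθ.le fun i => ?_).trans_lt hθ1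
  · exact Finset.sum_nonneg fun k _ => mul_nonneg (hKM.inv_apply_nonneg i k) (hN k j)
  · calc ((K⁻¹ * N) *ᵥ x) i = (K⁻¹ *ᵥ N *ᵥ x) i := by rw [mulVec_mulVec]
      _ ≤ (K⁻¹ *ᵥ θ • K *ᵥ x) i := mulVec_apply_le_mulVec_apply_of_nonneg hKM.inv_apply_nonneg
          (fun j => (hNK j).le) i
      _ = θ * x i := by
          rw [mulVec_smul, mulVec_mulVec, nonsing_inv_mul _ hKM.isUnit_det, one_mulVec]
          rfl

end RegularSplitting

section Riccati

variable {m n : Type*} [Fintype m] [Fintype n] [DecidableEq m] [DecidableEq n]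
  {A : Matrix m m ℝ} {D : Matrix n n ℝ} {B : Matrix m n ℝ} {C : Matrix n m ℝ}

def sylvesterSolve (A : Matrix m m ℝ) (D : Matrix n n ℝ) (R : Matrix m n ℝ) : Matrix m n ℝ :=
  of fun i j => (((1 : Matrix n n ℝ) ⊗ₖ A + Dᵀ ⊗ₖ (1 : Matrix m m ℝ))⁻¹ *ᵥ vec R) (j, i)

theorem vec_sylvesterSolve (A : Matrix m m ℝ) (D : Matrix n n ℝ) (R : Matrix m n ℝ) :
    vec (sylvesterSolve A D R) =
      ((1 : Matrix n n ℝ) ⊗ₖ A + Dᵀ ⊗ₖ (1 : Matrix m m ℝ))⁻¹ *ᵥ vec R :=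
  rfl

theorem mul_sylvesterSolve_add_sylvesterSolve_mul
    (h : IsUnit ((1 : Matrix n n ℝ) ⊗ₖ A + Dᵀ ⊗ₖ (1 : Matrix m m ℝ)).det) (R : Matrix m n ℝ) :
    A * sylvesterSolve A D R + sylvesterSolve A D R * D = R := by
  rw [← vec_inj, ← kroneckerSum_mulVec_vec, vec_sylvesterSolve, mulVec_mulVec,
    mul_nonsing_inv _ h, one_mulVec]

theorem sylvesterSolve_mono
    (h : IsNonsingMMatrix ((1 : Matrix n n ℝ) ⊗ₖ A + Dᵀ ⊗ₖ (1 : Matrix m m ℝ)))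
    {R R' : Matrix m n ℝ} (hR : ∀ i j, R i j ≤ R' i j) (i : m) (j : n) :
    sylvesterSolve A D R i j ≤ sylvesterSolve A D R' i j :=
  mulVec_apply_le_mulVec_apply_of_nonneg h.inv_apply_nonneg (fun p => hR p.2 p.1) (j, i)

def riccatiIter (A : Matrix m m ℝ) (D : Matrix n n ℝ) (B : Matrix m n ℝ) (C : Matrix n m ℝ) :
    ℕ → Matrix m n ℝ
  | 0 => 0
  | k + 1 => sylvesterSolve A D (B + riccatiIter A D B C k * C * riccatiIter A D B C k)

theorem riccatiIter_succ (k : ℕ) :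
    riccatiIter A D B C (k + 1) =
      sylvesterSolve A D (B + riccatiIter A D B C k * C * riccatiIter A D B C k) :=
  rfl

section
variable (hK : IsNonsingMMatrix ((1 : Matrix n n ℝ) ⊗ₖ A + Dᵀ ⊗ₖ (1 : Matrix m m ℝ)))
  (hB : ∀ i j, 0 ≤ B i j) (hC : ∀ i j, 0 ≤ C i j)
include hK hB hC

theorem riccatiIter_nonneg (k : ℕ) (i : m) (j : n) : 0 ≤ riccatiIter A D B C k i j := by
  induction k generalizing i j with
  | zero => exact le_rfl
  | succ k ih =>
    have h0 : sylvesterSolve A D 0 i j = 0 := by simp [sylvesterSolve]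
    rw [riccatiIter_succ, ← h0]
    refine sylvesterSolve_mono hK (fun a b => ?_) i j
    exact add_nonneg (hB a b) (mul_apply_nonneg (mul_apply_nonneg ih hC) ih a b)

theorem riccatiIter_le_succ (k : ℕ) (i : m) (j : n) :
    riccatiIter A D B C k i j ≤ riccatiIter A D B C (k + 1) i j := by
  induction k generalizing i j with
  | zero => exact riccatiIter_nonneg hK hB hC 1 i j
  | succ k ih =>
    rw [riccatiIter_succ, riccatiIter_succ (k + 1)]
    refine sylvesterSolve_mono hK (fun a b => ?_) i j
    rw [Matrix.add_apply, Matrix.add_apply]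
    exact add_le_add_right (mul_mul_apply_mono hC (riccatiIter_nonneg hK hB hC k) ih a b) _

end

end Riccati

section RiccatiSolution

variable {m n : Type*} [Fintype m] [Fintype n] {A : Matrix m m ℝ} {D : Matrix n n ℝ}
  {B : Matrix m n ℝ} {C : Matrix n m ℝ}

/-- Compare the equation at a row where `Y 1` is maximal. -/
theorem mulVec_one_le_one_of_riccati_step (hAZ : ∀ i j, i ≠ j → A i j ≤ 0)
    (hB : ∀ i j, 0 ≤ B i j) (hC : ∀ i j, 0 ≤ C i j) (hCD : ∀ i, (C *ᵥ 1) i < (D *ᵥ 1) i)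
    (hBA : ∀ i, (B *ᵥ 1) i < (A *ᵥ 1) i) {X Y : Matrix m n ℝ} (hX : ∀ i j, 0 ≤ X i j)
    (hXY : ∀ i j, X i j ≤ Y i j) (hX1 : ∀ i, (X *ᵥ 1) i ≤ 1)
    (hY : A * Y + Y * D = B + X * C * X) (i : m) : (Y *ᵥ 1) i ≤ 1 := by
  obtain ⟨a, -, hmax⟩ :=
    Finset.univ.exists_max_image (fun i => (Y *ᵥ 1) i) ⟨i, Finset.mem_univ _⟩
  set t := (Y *ᵥ 1) a
  have hY0 : ∀ i j, 0 ≤ Y i j := fun i j => (hX i j).trans (hXY i j)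
  have hrow : (A *ᵥ Y *ᵥ 1) a + (Y *ᵥ D *ᵥ 1) a = (B *ᵥ 1) a + (X *ᵥ C *ᵥ X *ᵥ 1) a := by
    have h := congrFun (congrArg (· *ᵥ (1 : n → ℝ)) hY) a
    simp only [add_mulVec, Pi.add_apply, ← mulVec_mulVec] at h
    exact h
  have hA : t * (A *ᵥ 1) a ≤ (A *ᵥ Y *ᵥ 1) a := by
    have hrowA := mulVec_apply_le_mulVec_apply_of_offDiag_nonpos hAZ (i := a) (x := Y *ᵥ 1)
      (y := t • 1) (fun j => by simpa using hmax j (Finset.mem_univ _)) (by simp [t])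
    simpa [mulVec_smul] using hrowA
  have hD : (Y *ᵥ C *ᵥ 1) a ≤ (Y *ᵥ D *ᵥ 1) a :=
    mulVec_apply_le_mulVec_apply_of_nonneg hY0 (fun j => (hCD j).le) a
  have hXCX : (X *ᵥ C *ᵥ X *ᵥ 1) a ≤ (Y *ᵥ C *ᵥ 1) a :=
    (mulVec_apply_le_mulVec_apply_of_nonneg hX
      (mulVec_apply_le_mulVec_apply_of_nonneg hC hX1) a).trans
      (mulVec_apply_le_mulVec_apply_of_le hXY (mulVec_apply_nonneg hC fun _ => zero_le_one) a)
  have hA1 : 0 < (A *ᵥ 1) a :=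
    (mulVec_apply_nonneg hB (fun _ => zero_le_one) a).trans_lt (hBA a)
  have ht : t ≤ 1 := by nlinarith [hBA a]
  exact (hmax i (Finset.mem_univ _)).trans ht

variable [DecidableEq m] [DecidableEq n]

theorem riccatiIter_mulVec_one_le
    (hK : IsNonsingMMatrix ((1 : Matrix n n ℝ) ⊗ₖ A + Dᵀ ⊗ₖ (1 : Matrix m m ℝ)))
    (hAZ : ∀ i j, i ≠ j → A i j ≤ 0) (hB : ∀ i j, 0 ≤ B i j) (hC : ∀ i j, 0 ≤ C i j)
    (hCD : ∀ i, (C *ᵥ 1) i < (D *ᵥ 1) i) (hBA : ∀ i, (B *ᵥ 1) i < (A *ᵥ 1) i) (k : ℕ)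
    (i : m) : (riccatiIter A D B C k *ᵥ 1) i ≤ 1 := by
  induction k generalizing i with
  | zero => simp [riccatiIter]
  | succ k ih =>
    exact mulVec_one_le_one_of_riccati_step hAZ hB hC hCD hBA (riccatiIter_nonneg hK hB hC k)
      (riccatiIter_le_succ hK hB hC k) ih
      (mul_sylvesterSolve_add_sylvesterSolve_mul hK.isUnit_det _) i

/-- The iteration `riccatiIter` increases, with row sums at most `1`; its limit is the solution. -/
theorem exists_riccati_solution_mulVec_one_le (hAZ : ∀ i j, i ≠ j → A i j ≤ 0)
    (hDZ : ∀ i j, i ≠ j → D i j ≤ 0) (hB : ∀ i j, 0 ≤ B i j) (hC : ∀ i j, 0 ≤ C i j)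
    (hCD : ∀ i, (C *ᵥ 1) i < (D *ᵥ 1) i) (hBA : ∀ i, (B *ᵥ 1) i < (A *ᵥ 1) i) :
    ∃ Z : Matrix m n ℝ, (∀ i j, 0 ≤ Z i j) ∧ Z * C * Z - Z * D - A * Z + B = 0 ∧
      ∀ i, (Z *ᵥ 1) i ≤ 1 := by
  have hK : IsNonsingMMatrix ((1 : Matrix n n ℝ) ⊗ₖ A + Dᵀ ⊗ₖ (1 : Matrix m m ℝ)) :=
    .kroneckerSum ⟨hAZ, 1, fun _ => one_pos,
      fun i => (mulVec_apply_nonneg hB (fun _ => zero_le_one) i).trans_lt (hBA i)⟩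
      ⟨hDZ, 1, fun _ => one_pos,
      fun i => (mulVec_apply_nonneg hC (fun _ => zero_le_one) i).trans_lt (hCD i)⟩
  set X := riccatiIter A D B C
  have hX0 := riccatiIter_nonneg hK hB hC
  have hX1 := riccatiIter_mulVec_one_le hK hAZ hB hC hCD hBA
  have hXle : ∀ k i j, X k i j ≤ 1 := fun k i j =>
    calc X k i j = X k i j * 1 := (mul_one _).symm
      _ ≤ (X k *ᵥ 1) i := Finset.single_le_sum (f := fun l => X k i l * 1)
          (fun l _ => mul_nonneg (hX0 k i l) zero_le_one) (Finset.mem_univ j)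
      _ ≤ 1 := hX1 k i
  set Z : Matrix m n ℝ := of fun i j => ⨆ k, X k i j
  have htend : Filter.Tendsto X Filter.atTop (𝓝 Z) :=
    tendsto_pi_nhds.2 fun i => tendsto_pi_nhds.2 fun j =>
      tendsto_atTop_ciSup (monotone_nat_of_le_succ fun k => riccatiIter_le_succ hK hB hC k i j)
        ⟨1, by rintro _ ⟨k, rfl⟩; exact hXle k i j⟩
  have hZ : A * Z + Z * D = B + Z * C * Z := by
    have hL : Filter.Tendsto (fun k => A * X (k + 1) + X (k + 1) * D) Filter.atTop
        (𝓝 (A * Z + Z * D)) :=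
      ((by fun_prop : Continuous fun Y : Matrix m n ℝ => A * Y + Y * D).tendsto Z).comp
        (htend.comp (Filter.tendsto_add_atTop_nat 1))
    have hR : Filter.Tendsto (fun k => B + X k * C * X k) Filter.atTop (𝓝 (B + Z * C * Z)) :=
      ((by fun_prop : Continuous fun Y : Matrix m n ℝ => B + Y * C * Y).tendsto Z).comp htend
    exact tendsto_nhds_unique hL (hR.congr fun k =>
      (mul_sylvesterSolve_add_sylvesterSolve_mul hK.isUnit_det _).symm)
  refine ⟨Z, fun i j => ?_, ?_, fun i => ?_⟩
  · exact ge_of_tendsto' (tendsto_pi_nhds.1 (tendsto_pi_nhds.1 htend i) j) fun k => hX0 k i j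
  · rw [← neg_eq_zero, ← sub_eq_zero.2 hZ]
    abel
  · exact le_of_tendsto'
      (((by fun_prop : Continuous fun Y : Matrix m n ℝ => (Y *ᵥ 1) i).tendsto Z).comp htend)
      fun k => hX1 k i

end RiccatiSolution

section ClosedLoop

variable {m n : Type*} [Fintype m] [Fintype n]

theorem riccati_closedLoop_mulVec {R : Type*} [CommRing R] {A : Matrix m m R}
    {D : Matrix n n R} {B : Matrix m n R} {C : Matrix n m R} {X : Matrix m n R}
    (hX : X * C * X - X * D - A * X + B = 0) :
    (A - X * C) *ᵥ (1 - X *ᵥ 1) = A *ᵥ 1 - B *ᵥ 1 + X *ᵥ (D *ᵥ 1 - C *ᵥ 1) := by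
  have hAX : A * X = X * C * X - X * D + B := by
    rw [← sub_eq_zero, ← neg_eq_zero, ← hX]
    abel
  simp only [mulVec_sub, mulVec_mulVec, Matrix.sub_mul, hAX, sub_mulVec, add_mulVec]
  abel

variable {A : Matrix m m ℝ} {D : Matrix n n ℝ} {B : Matrix m n ℝ} {C : Matrix n m ℝ}
  {X : Matrix m n ℝ}

theorem IsNonsingMMatrix.sub_mul_of_riccati (hAZ : ∀ i j, i ≠ j → A i j ≤ 0)
    (hC : ∀ i j, 0 ≤ C i j) (hCD : ∀ i, (C *ᵥ 1) i < (D *ᵥ 1) i)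
    (hBA : ∀ i, (B *ᵥ 1) i < (A *ᵥ 1) i) (hX0 : ∀ i j, 0 ≤ X i j)
    (hX : X * C * X - X * D - A * X + B = 0) (hX1 : ∀ i, (X *ᵥ 1) i ≤ 1) :
    IsNonsingMMatrix (A - X * C) := by
  refine .of_nonneg_of_mulVec_pos (p := 1 - X *ᵥ 1) (fun i j hij => ?_)
    (fun i => sub_nonneg.2 (hX1 i)) fun i => ?_
  · rw [Matrix.sub_apply]
    linarith [hAZ i j hij, mul_apply_nonneg hX0 hC i j]
  · have hXDC : 0 ≤ (X *ᵥ (D *ᵥ 1 - C *ᵥ 1)) i :=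
      mulVec_apply_nonneg hX0 (fun j => sub_nonneg.2 (hCD j).le) i
    rw [riccati_closedLoop_mulVec hX, Pi.add_apply, Pi.sub_apply]
    linarith [hBA i]

theorem IsNonsingMMatrix.sub_mul_of_mulVec_one_le (hDZ : ∀ i j, i ≠ j → D i j ≤ 0)
    (hC : ∀ i j, 0 ≤ C i j) (hCD : ∀ i, (C *ᵥ 1) i < (D *ᵥ 1) i) (hX0 : ∀ i j, 0 ≤ X i j)
    (hX1 : ∀ i, (X *ᵥ 1) i ≤ 1) : IsNonsingMMatrix (D - C * X) := by
  refine ⟨fun i j hij => ?_, 1, fun _ => one_pos, fun i => ?_⟩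
  · rw [Matrix.sub_apply]
    linarith [hDZ i j hij, mul_apply_nonneg hC hX0 i j]
  · have hCX : (C *ᵥ X *ᵥ 1) i ≤ (C *ᵥ 1) i := mulVec_apply_le_mulVec_apply_of_nonneg hC hX1 i
    rw [sub_mulVec, ← mulVec_mulVec, Pi.sub_apply]
    linarith [hCD i]

end ClosedLoop

theorem mulVec_one_lt_of_fromBlocks {m n : Type*} [Fintype m] [Fintype n]
    {P : Matrix n n ℝ} {Q : Matrix n m ℝ} {R : Matrix m n ℝ} {S : Matrix m m ℝ}
    (h : ∀ i, 0 < (fromBlocks P (-Q) (-R) S *ᵥ 1) i) :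
    (∀ i, (Q *ᵥ 1) i < (P *ᵥ 1) i) ∧ ∀ i, (R *ᵥ 1) i < (S *ᵥ 1) i := by
  have hone : (1 : n ⊕ m → ℝ) = Sum.elim (1 : n → ℝ) (1 : m → ℝ) := by
    funext p
    cases p <;> rfl
  rw [hone] at h
  constructor
  · intro i
    have hi := h (Sum.inl i)
    simp only [fromBlocks_mulVec, Sum.elim_inl, Sum.elim_comp_inl, Sum.elim_comp_inr,
      Pi.add_apply, neg_mulVec, Pi.neg_apply] at hi
    linarith
  · intro i
    have hi := h (Sum.inr i)
    simp only [fromBlocks_mulVec, Sum.elim_inr, Sum.elim_comp_inl, Sum.elim_comp_inr,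
      Pi.add_apply, neg_mulVec, Pi.neg_apply] at hi
    linarith

theorem stmt10_general {m n : ℕ} (ω : ℝ) (hω : ω ∈ Set.Icc (0 : ℝ) 1)
    (A₁ A₂ : Matrix (Fin m) (Fin m) ℂ) (B : Matrix (Fin m) (Fin n) ℂ)
    (C : Matrix (Fin n) (Fin m) ℂ) (D₁ D₂ : Matrix (Fin n) (Fin n) ℂ)
    (hQt1 : ∀ i, 0 < ((Matrix.fromBlocks (omegaComp ω D₁ - cabs D₂) (-(cabs C))
      (-(cabs B)) (omegaComp ω A₁ - cabs A₂)) *ᵥ 1) i)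
    (Φt : Matrix (Fin m) (Fin n) ℝ)
    (hΦtPos : ∀ i j, 0 ≤ Φt i j)
    (hΦtSol : Φt * cabs C * Φt - Φt * (omegaComp ω D₁ - cabs D₂) -
      (omegaComp ω A₁ - cabs A₂) * Φt + cabs B = 0)
    (hΦtMin : ∀ Z : Matrix (Fin m) (Fin n) ℝ, (∀ i j, 0 ≤ Z i j) →
      Z * cabs C * Z - Z * (omegaComp ω D₁ - cabs D₂) -
        (omegaComp ω A₁ - cabs A₂) * Z + cabs B = 0 → ∀ i j, Φt i j ≤ Z i j)
    (Φ : Matrix (Fin m) (Fin n) ℂ)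
    (hΦle : ∀ i j, ‖Φ i j‖ ≤ Φt i j) :
    specRad (((1 : Matrix (Fin n) (Fin n) ℂ) ⊗ₖ A₁ + D₁ᵀ ⊗ₖ (1 : Matrix (Fin m) (Fin m) ℂ))⁻¹ *
        ((1 : Matrix (Fin n) (Fin n) ℂ) ⊗ₖ (A₂ + Φ * C) +
          (D₂ + C * Φ)ᵀ ⊗ₖ (1 : Matrix (Fin m) (Fin m) ℂ))) ≤
      specRad (realToC (((1 : Matrix (Fin n) (Fin n) ℝ) ⊗ₖ omegaComp ω A₁ +
          (omegaComp ω D₁)ᵀ ⊗ₖ (1 : Matrix (Fin m) (Fin m) ℝ))⁻¹ *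
        ((1 : Matrix (Fin n) (Fin n) ℝ) ⊗ₖ (cabs A₂ + Φt * cabs C) +
          (cabs D₂ + cabs C * Φt)ᵀ ⊗ₖ (1 : Matrix (Fin m) (Fin m) ℝ)))) ∧
    specRad (realToC (((1 : Matrix (Fin n) (Fin n) ℝ) ⊗ₖ omegaComp ω A₁ +
          (omegaComp ω D₁)ᵀ ⊗ₖ (1 : Matrix (Fin m) (Fin m) ℝ))⁻¹ *
        ((1 : Matrix (Fin n) (Fin n) ℝ) ⊗ₖ (cabs A₂ + Φt * cabs C) +
          (cabs D₂ + cabs C * Φt)ᵀ ⊗ₖ (1 : Matrix (Fin m) (Fin m) ℝ)))) < 1 := by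
  obtain ⟨hCD, hBA⟩ := mulVec_one_lt_of_fromBlocks hQt1
  have hB : ∀ i j, 0 ≤ cabs B i j := fun i j => norm_nonneg (B i j)
  have hC : ∀ i j, 0 ≤ cabs C i j := fun i j => norm_nonneg (C i j)
  have hAZ := omegaComp_sub_cabs_apply_nonpos_of_ne ω A₁ A₂
  have hDZ := omegaComp_sub_cabs_apply_nonpos_of_ne ω D₁ D₂
  obtain ⟨Z, hZ0, hZ, hZ1⟩ := exists_riccati_solution_mulVec_one_le hAZ hDZ hB hC hCD hBA
  have hΦt1 : ∀ i, (Φt *ᵥ 1) i ≤ 1 := fun i =>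
    (mulVec_apply_le_mulVec_apply_of_le (hΦtMin Z hZ0 hZ) (fun _ => zero_le_one) i).trans (hZ1 i)
  have hKN := (IsNonsingMMatrix.sub_mul_of_riccati hAZ hC hCD hBA hΦtPos hΦtSol hΦt1).kroneckerSum
    (IsNonsingMMatrix.sub_mul_of_mulVec_one_le hDZ hC hCD hΦtPos hΦt1)
  rw [sub_sub, sub_sub, kroneckerSum_sub] at hKN
  have hKZ := kroneckerSum_apply_nonpos_of_ne (omegaComp_apply_nonpos_of_ne ω A₁)
    (omegaComp_apply_nonpos_of_ne ω D₁)
  have hN := kroneckerSum_apply_nonneg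
    (fun i j => add_nonneg (norm_nonneg (A₂ i j)) (mul_apply_nonneg hΦtPos hC i j))
    (fun i j => add_nonneg (norm_nonneg (D₂ i j)) (mul_apply_nonneg hC hΦtPos i j))
  have hKM := IsNonsingMMatrix.of_sub hKZ hN hKN
  rw [← omegaComp_kroneckerSum] at hKM
  refine ⟨specRad_le_specRad_realToC (norm_mul_apply_le ?_ ?_),
    specRad_realToC_inv_mul_lt_one hKZ hN hKN⟩
  · rw [← omegaComp_kroneckerSum]
    exact norm_inv_apply_le_inv_omegaComp hω hKM
  · exact norm_kroneckerSum_apply_le (norm_add_mul_apply_le hΦle fun _ _ => le_rfl)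
      (norm_add_mul_apply_le (fun _ _ => le_rfl) hΦle)

/-- comparison of the iteration matrices' spectral radii for the fixed-point
iteration: `ρ(complex iteration matrix) ≤ ρ(real dominating iteration matrix) < 1`. -/
theorem stmt10 {m n : ℕ} (ω : ℝ) (hω : ω ∈ Set.Icc (0 : ℝ) 1)
    (A A₁ A₂ : Matrix (Fin m) (Fin m) ℂ) (B : Matrix (Fin m) (Fin n) ℂ)
    (C : Matrix (Fin n) (Fin m) ℂ) (D D₁ D₂ : Matrix (Fin n) (Fin n) ℂ)
    (hQ : IsNonsingMMatrix (omegaComp ω (Matrix.fromBlocks D (-C) (-B) A)))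
    (hQ1 : ∀ i, 0 < ((omegaComp ω (Matrix.fromBlocks D (-C) (-B) A)) *ᵥ 1) i)
    (hA : A = A₁ - A₂) (hD : D = D₁ - D₂)
    (hKron : IsNonsingMMatrix ((1 : Matrix (Fin n) (Fin n) ℝ) ⊗ₖ omegaComp ω A₁ +
      (omegaComp ω D₁)ᵀ ⊗ₖ (1 : Matrix (Fin m) (Fin m) ℝ)))
    (hQt : IsNonsingMMatrix (Matrix.fromBlocks (omegaComp ω D₁ - cabs D₂) (-(cabs C))
      (-(cabs B)) (omegaComp ω A₁ - cabs A₂)))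
    (hQtle : ∀ i j, Matrix.fromBlocks (omegaComp ω D₁ - cabs D₂) (-(cabs C))
        (-(cabs B)) (omegaComp ω A₁ - cabs A₂) i j ≤
      omegaComp ω (Matrix.fromBlocks D (-C) (-B) A) i j)
    (hQt1 : ∀ i, 0 < ((Matrix.fromBlocks (omegaComp ω D₁ - cabs D₂) (-(cabs C))
      (-(cabs B)) (omegaComp ω A₁ - cabs A₂)) *ᵥ 1) i)
    (Φt : Matrix (Fin m) (Fin n) ℝ)
    (hΦtPos : ∀ i j, 0 ≤ Φt i j)
    (hΦtSol : Φt * cabs C * Φt - Φt * (omegaComp ω D₁ - cabs D₂) -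
      (omegaComp ω A₁ - cabs A₂) * Φt + cabs B = 0)
    (hΦtMin : ∀ Z : Matrix (Fin m) (Fin n) ℝ, (∀ i j, 0 ≤ Z i j) →
      Z * cabs C * Z - Z * (omegaComp ω D₁ - cabs D₂) -
        (omegaComp ω A₁ - cabs A₂) * Z + cabs B = 0 → ∀ i j, Φt i j ≤ Z i j)
    (Φ : Matrix (Fin m) (Fin n) ℂ)
    (hΦSol : Φ * C * Φ - Φ * D - A * Φ + B = 0)
    (hΦle : ∀ i j, ‖Φ i j‖ ≤ Φt i j) :
    specRad (((1 : Matrix (Fin n) (Fin n) ℂ) ⊗ₖ A₁ + D₁ᵀ ⊗ₖ (1 : Matrix (Fin m) (Fin m) ℂ))⁻¹ *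
        ((1 : Matrix (Fin n) (Fin n) ℂ) ⊗ₖ (A₂ + Φ * C) +
          (D₂ + C * Φ)ᵀ ⊗ₖ (1 : Matrix (Fin m) (Fin m) ℂ))) ≤
      specRad (realToC (((1 : Matrix (Fin n) (Fin n) ℝ) ⊗ₖ omegaComp ω A₁ +
          (omegaComp ω D₁)ᵀ ⊗ₖ (1 : Matrix (Fin m) (Fin m) ℝ))⁻¹ *
        ((1 : Matrix (Fin n) (Fin n) ℝ) ⊗ₖ (cabs A₂ + Φt * cabs C) +
          (cabs D₂ + cabs C * Φt)ᵀ ⊗ₖ (1 : Matrix (Fin m) (Fin m) ℝ)))) ∧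
    specRad (realToC (((1 : Matrix (Fin n) (Fin n) ℝ) ⊗ₖ omegaComp ω A₁ +
          (omegaComp ω D₁)ᵀ ⊗ₖ (1 : Matrix (Fin m) (Fin m) ℝ))⁻¹ *
        ((1 : Matrix (Fin n) (Fin n) ℝ) ⊗ₖ (cabs A₂ + Φt * cabs C) +
          (cabs D₂ + cabs C * Φt)ᵀ ⊗ₖ (1 : Matrix (Fin m) (Fin m) ℝ)))) < 1 :=
  stmt10_general ω hω A₁ A₂ B C D₁ D₂ hQt1 Φt hΦtPos hΦtSol hΦtMin Φ hΦle
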